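/- arXiv:0909.2120 — 3 statements merged into one kernel-verified Lean document; each statement's English description precedes it below -/
import Mathlib

section
/- For each integer d ≥ 2 there exists a finite constant H_*(d) with the following property: if N ≥ 1, H ∈ [0,N] is a real number, and Y_1,…,Y_N are random variables defined on a common probability space, each taking values in {0,…,d−1}, such that H(Y_{σ(1)},…,Y_{σ(k)})/log d = min{k, H} for every permutation σ of {1,…,N} and every k = 1,…,N, then H ≤ H_*(d) or N − H ≤ H_*(d). (One may take H_*(d) related to the binomial coefficient C(d² + d − 1, d − 1).) -/
open Filter

noncomputable def entropy {α : Type*} [Fintype α] (p : α → ℝ) : ℝ :=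
  -∑ x, p x * Real.log (p x)

def IsPMF {α : Type*} [Fintype α] (p : α → ℝ) : Prop :=
  (∀ x, 0 ≤ p x) ∧ ∑ x, p x = 1

noncomputable def margin {d N : ℕ} (μ : (Fin N → Fin d) → ℝ) (S : Finset (Fin N)) :
    (({ i // i ∈ S }) → Fin d) → ℝ :=
  fun y => ∑ x : Fin N → Fin d, if ∀ i : { i // i ∈ S }, x i.1 = y i then μ x else 0

/-- Mutual information between `X_S` and `X_{Sᶜ}`. -/
noncomputable def MIS {d N : ℕ} (μ : (Fin N → Fin d) → ℝ) (S : Finset (Fin N)) : ℝ :=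
  entropy (margin μ S) + entropy (margin μ Sᶜ) - entropy μ

/-- The Edelman–Sporns–Tononi neural complexity. -/
noncomputable def neural {d N : ℕ} (μ : (Fin N → Fin d) → ℝ) : ℝ :=
  (1 / (N + 1 : ℝ)) * ∑ S : Finset (Fin N), (1 / (N.choose S.card : ℝ)) * MIS μ S

noncomputable def avgEntropy {d N : ℕ} (μ : (Fin N → Fin d) → ℝ) (k : ℕ) : ℝ :=
  (1 / (N.choose k : ℝ)) *
    ∑ S ∈ Finset.powersetCard k (Finset.univ : Finset (Fin N)), entropy (margin μ S)

/-- The entropy profile `h_X : [0,1] → [0,1]`, piecewise affine interpolation of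
`k/N ↦ (average entropy of subsystems of size k)/(N log d)`. -/
noncomputable def profile {d N : ℕ} (μ : (Fin N → Fin d) → ℝ) (t : ℝ) : ℝ :=
  if t ≤ 0 then 0 else
    (avgEntropy μ (⌈t * N⌉.toNat - 1)
      + (t * N - ((⌈t * N⌉.toNat - 1 : ℕ) : ℝ)) *
        (avgEntropy μ ⌈t * N⌉.toNat - avgEntropy μ (⌈t * N⌉.toNat - 1)))
      / (N * Real.log d)

/-!
Suppose `H` and `N - H` are both large and `r + 1 < H ≤ r + 2`. Fix `r` coordinates `A` and two
more coordinates `P`. Then `H(Y_A, Y_P) - H(Y_A) = (H - r) log d > log d`, so some value of `Y_A` is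
compatible with more than `d` values of `Y_P`. On the other hand, any two further coordinates
`w ≠ w'` bring `A` to `r + 2 ≥ H` coordinates, whose entropy can no longer grow, so
`(Y_A, Y_w, Y_w')` determines `Y_P` on the support. Choose a witness `z_c` in the support for
each of those values `c`. With more than `d ^ (d * d)` spare coordinates, the pigeonhole principle
gives `w ≠ w'` with `z_c w = z_c w'` for every `c`, and then `c ↦ z_c w` is injective into `Fin d`,
which is absurd.
-/

open Finset Real

section Pushforward

variable {α β γ : Type*} [Fintype α] [DecidableEq β] [DecidableEq γ]

noncomputable def pushforward (p : α → ℝ) (f : α → β) (b : β) : ℝ :=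
  ∑ a, if f a = b then p a else 0

lemma pushforward_comp [Fintype β] (p : α → ℝ) (f : α → β) (h : β → γ) :
    pushforward (pushforward p f) h = pushforward p (h ∘ f) := by
  funext c
  simp only [pushforward, ← sum_filter, Function.comp_apply]
  rw [sum_fiberwise_eq_sum_filter]
  simp

lemma pushforward_nonneg {p : α → ℝ} (hp : ∀ a, 0 ≤ p a) (f : α → β) (b : β) :
    0 ≤ pushforward p f b :=
  sum_nonneg fun a _ => by split_ifs <;> simp [hp a]

lemma sum_pushforward [Fintype β] (p : α → ℝ) (f : α → β) :
    ∑ b, pushforward p f b = ∑ a, p a := by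
  unfold pushforward
  rw [sum_comm]
  simp

lemma pushforward_apply_ne_zero {p : α → ℝ} (hp : ∀ a, 0 ≤ p a) (f : α → β) {a : α}
    (ha : p a ≠ 0) : pushforward p f (f a) ≠ 0 := by
  have hle : p a ≤ pushforward p f (f a) := by
    unfold pushforward
    simpa using single_le_sum (f := fun a' => if f a' = f a then p a' else 0)
      (fun a' _ => by split_ifs <;> simp [hp a']) (mem_univ a)
  exact (((hp a).lt_of_ne' ha).trans_le hle).ne'

lemma exists_of_pushforward_ne_zero {p : α → ℝ} {f : α → β} {b : β}
    (hb : pushforward p f b ≠ 0) : ∃ a, p a ≠ 0 ∧ f a = b := by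
  obtain ⟨a, -, ha⟩ := exists_ne_zero_of_sum_ne_zero hb
  by_cases hfa : f a = b
  · exact ⟨a, by simpa [hfa] using ha, hfa⟩
  · simp [hfa] at ha

lemma entropy_pushforward_of_injective [Fintype β] [Fintype γ] (q : β → ℝ) {h : β → γ}
    (hh : Function.Injective h) : entropy (pushforward q h) = entropy q := by
  have hrange : ∀ b, pushforward q h (h b) = q b := fun b => by
    simp [pushforward, hh.eq_iff]
  have hoff : ∀ c ∉ Set.range h, pushforward q h c = 0 := fun c hc =>
    sum_eq_zero fun b _ => by simp [show h b ≠ c from fun hbc => hc ⟨b, hbc⟩]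
  unfold entropy
  congr 1
  exact (Fintype.sum_of_injective h hh _ _ (fun c hc => by simp [hoff c hc])
    (fun b => by rw [hrange])).symm

lemma entropy_pushforward_comp_of_injective [Fintype β] [Fintype γ] (p : α → ℝ) (g : α → β)
    {h : β → γ} (hh : Function.Injective h) :
    entropy (pushforward p (h ∘ g)) = entropy (pushforward p g) := by
  rw [← pushforward_comp, entropy_pushforward_of_injective _ hh]

end Pushforward

section ScaledEntropy

variable {γ : Type*} [Fintype γ]

/-- `(∑ w) · entropy (w / ∑ w)`, written so that it needs no normalisation. -/
noncomputable def scaledEntropy (w : γ → ℝ) : ℝ :=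
  ∑ c, w c * (log (∑ c', w c') - log (w c))

lemma mul_log_sub_log_nonneg {x W : ℝ} (hx : 0 ≤ x) (hxW : x ≤ W) :
    0 ≤ x * (log W - log x) := by
  rcases hx.eq_or_lt with rfl | hx
  · simp
  · exact mul_nonneg hx.le (sub_nonneg.2 (log_le_log hx hxW))

lemma mul_log_sub_log_le {x W n : ℝ} (hx : 0 ≤ x) (hxW : x ≤ W) (hn : 0 < n) :
    x * (log W - log x) ≤ x * log n + (W / n - x) := by
  rcases hx.eq_or_lt with rfl | hx
  · simpa using div_nonneg (hx.trans hxW) hn.le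
  have hW : 0 < W := hx.trans_le hxW
  have hlog : log W - log x = log n + log (W / (n * x)) := by
    rw [log_div (by positivity) (by positivity), log_mul hn.ne' hx.ne']
    ring
  calc x * (log W - log x) = x * log n + x * log (W / (n * x)) := by rw [hlog, mul_add]
    _ ≤ x * log n + x * (W / (n * x) - 1) := by
      gcongr
      exact log_le_sub_one_of_pos (by positivity)
    _ = x * log n + (W / n - x) := by field_simp

variable {w : γ → ℝ}

lemma scaledEntropy_nonneg (hw : ∀ c, 0 ≤ w c) : 0 ≤ scaledEntropy w :=
  sum_nonneg fun c _ => mul_log_sub_log_nonneg (hw c) (single_le_sum (fun c _ => hw c) (mem_univ c))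

lemma scaledEntropy_pos (hw : ∀ c, 0 ≤ w c) {c c' : γ} (hcc' : c ≠ c') (hc : w c ≠ 0)
    (hc' : w c' ≠ 0) : 0 < scaledEntropy w := by
  have hwc : 0 < w c := (hw c).lt_of_ne' hc
  have hlt : w c < ∑ c'', w c'' :=
    single_lt_sum hcc'.symm (mem_univ c) (mem_univ c') ((hw c').lt_of_ne' hc') fun k _ _ => hw k
  refine sum_pos' (fun k _ => ?_) ⟨c, mem_univ c, mul_pos hwc (sub_pos.2 (log_lt_log hwc hlt))⟩
  exact mul_log_sub_log_nonneg (hw k) (single_le_sum (fun c _ => hw c) (mem_univ k))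

lemma scaledEntropy_le [DecidableEq γ] (hw : ∀ c, 0 ≤ w c) {n : ℕ} (hn : 0 < n)
    (hsupp : #{c | w c ≠ 0} ≤ n) : scaledEntropy w ≤ (∑ c, w c) * log n := by
  set W := ∑ c, w c
  have hn' : (0 : ℝ) < n := by exact_mod_cast hn
  have hwW : ∀ c, w c ≤ W := fun c => single_le_sum (fun c _ => hw c) (mem_univ c)
  have hsuppW : ∑ c with w c ≠ 0, w c = W := sum_filter_ne_zero _
  calc scaledEntropy w = ∑ c with w c ≠ 0, w c * (log W - log (w c)) :=
        (sum_filter_of_ne fun c _ hc => left_ne_zero_of_mul hc).symm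
    _ ≤ ∑ c with w c ≠ 0, (w c * log n + (W / n - w c)) :=
        sum_le_sum fun c _ => mul_log_sub_log_le (hw c) (hwW c) hn'
    _ = W * log n + (#{c | w c ≠ 0} * (W / n) - W) := by
        rw [sum_add_distrib, ← sum_mul, sum_sub_distrib, hsuppW, sum_const, nsmul_eq_mul]
    _ ≤ W * log n := by
        have : (#{c | w c ≠ 0} : ℝ) * (W / n) ≤ n * (W / n) := by
          gcongr
          exact div_nonneg (sum_nonneg fun c _ => hw c) hn'.le
        rw [mul_div_cancel₀ _ hn'.ne'] at this
        linarith

end ScaledEntropy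

section ChainRule

variable {β γ : Type*} [Fintype β] [Fintype γ] [DecidableEq β]

lemma pushforward_fst_apply (q : β × γ → ℝ) (b : β) :
    pushforward q Prod.fst b = ∑ c, q (b, c) := by
  rw [pushforward, Fintype.sum_prod_type, Fintype.sum_eq_single b fun x hx => by simp [hx]]
  simp

lemma entropy_sub_entropy_fst (q : β × γ → ℝ) :
    entropy q - entropy (pushforward q Prod.fst) = ∑ b, scaledEntropy fun c => q (b, c) := by
  simp only [entropy, scaledEntropy, pushforward_fst_apply, Fintype.sum_prod_type, mul_sub,
    sum_sub_distrib, ← sum_mul]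
  ring

end ChainRule

section Fibers

variable {α β γ : Type*} [Fintype α] [Fintype β] [Fintype γ] [DecidableEq β] [DecidableEq γ]
  {p : α → ℝ}

lemma eq_of_entropy_pair_eq (hp : ∀ a, 0 ≤ p a) (f : α → β) (g : α → γ)
    (hE : entropy (pushforward p fun a => (f a, g a)) = entropy (pushforward p f))
    {a a' : α} (ha : p a ≠ 0) (ha' : p a' ≠ 0) (hf : f a = f a') : g a = g a' := by
  by_contra hg
  set q := pushforward p fun a => (f a, g a)
  have hq : ∀ x, 0 ≤ q x := pushforward_nonneg hp _
  have hfst : pushforward q Prod.fst = pushforward p f := pushforward_comp _ _ _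
  have hchain := entropy_sub_entropy_fst q
  rw [hfst, ← hE, sub_self] at hchain
  have hpos : 0 < scaledEntropy fun c => q (f a, c) := by
    refine scaledEntropy_pos (fun c => hq _) hg (pushforward_apply_ne_zero hp _ ha) ?_
    rw [hf]
    exact pushforward_apply_ne_zero hp _ ha'
  have : 0 < ∑ b, scaledEntropy fun c => q (b, c) :=
    sum_pos' (fun b _ => scaledEntropy_nonneg fun c => hq _) ⟨f a, mem_univ _, hpos⟩
  linarith

lemma exists_large_fiber (hp : IsPMF p) (f : α → β) (g : α → γ) {n : ℕ} (hn : 0 < n)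
    (hgap : entropy (pushforward p f) + log n < entropy (pushforward p fun a => (f a, g a))) :
    ∃ b, ∃ t : Finset γ, n < #t ∧ ∀ c ∈ t, ∃ a, p a ≠ 0 ∧ f a = b ∧ g a = c := by
  by_contra! hsmall
  set q := pushforward p fun a => (f a, g a)
  have hfst : pushforward q Prod.fst = pushforward p f := pushforward_comp _ _ _
  have hfiber (b : β) : scaledEntropy (fun c => q (b, c)) ≤ (∑ c, q (b, c)) * log n := by
    refine scaledEntropy_le (fun c => pushforward_nonneg hp.1 _ _) hn ?_
    by_contra! hlt
    obtain ⟨c, hc, hnone⟩ := hsmall b _ hlt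
    obtain ⟨a, ha, hfg⟩ := exists_of_pushforward_ne_zero (mem_filter.1 hc).2
    exact hnone a ha (congrArg Prod.fst hfg) (congrArg Prod.snd hfg)
  have hmass : ∑ b, ∑ c, q (b, c) = 1 := by
    rw [← Fintype.sum_prod_type, sum_pushforward, hp.2]
  have hchain := entropy_sub_entropy_fst q
  rw [hfst] at hchain
  have : ∑ b, scaledEntropy (fun c => q (b, c)) ≤ log n :=
    calc _ ≤ ∑ b, (∑ c, q (b, c)) * log n := sum_le_sum fun b _ => hfiber b
      _ = log n := by rw [← sum_mul, hmass, one_mul]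
  linarith

end Fibers

lemma Fin.exists_perm_castLE_eq {k N : ℕ} (hk : k ≤ N) (e : Fin k ↪ Fin N) :
    ∃ σ : Equiv.Perm (Fin N), ∀ j, σ (Fin.castLE hk j) = e j := by
  let f := (Fin.castLEEmb hk).toEquivRange.symm.trans e.toEquivRange
  refine ⟨f.extendSubtype, fun j => ?_⟩
  rw [Equiv.extendSubtype_apply_of_mem f (Fin.castLE hk j) ⟨j, rfl⟩]
  exact congrArg e ((Fin.castLEEmb hk).toEquivRange_symm_apply_self j)

section Margins

variable {d N : ℕ}

lemma margin_eq_pushforward (μ : (Fin N → Fin d) → ℝ) (S : Finset (Fin N)) :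
    margin μ S = pushforward μ S.restrict :=
  funext fun _ => sum_congr rfl fun _ _ => if_congr funext_iff.symm rfl rfl

lemma entropy_pushforward_restrict_pair (μ : (Fin N → Fin d) → ℝ) (S T : Finset (Fin N)) :
    entropy (pushforward μ fun z => (S.restrict z, T.restrict z)) =
      entropy (margin μ (S ∪ T)) := by
  have hinj : Function.Injective fun y : (S ∪ T : Finset (Fin N)) → Fin d =>
      (fun i : S => y ⟨i, mem_union_left T i.2⟩, fun i : T => y ⟨i, mem_union_right S i.2⟩) := by
    intro y y' hyy'
    simp only [Prod.mk.injEq] at hyy'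
    funext ⟨i, hi⟩
    rcases mem_union.1 hi with hS | hT
    · exact congrFun hyy'.1 ⟨i, hS⟩
    · exact congrFun hyy'.2 ⟨i, hT⟩
  rw [margin_eq_pushforward, ← entropy_pushforward_comp_of_injective μ (S ∪ T).restrict hinj]
  rfl

lemma entropy_margin_div_log_eq {μ : (Fin N → Fin d) → ℝ} {H : ℝ}
    (hyp : ∀ σ : Equiv.Perm (Fin N), ∀ k : ℕ, 1 ≤ k → ∀ hk : k ≤ N,
      entropy (fun y : Fin k → Fin d =>
          ∑ z : Fin N → Fin d,
            if ∀ j : Fin k, z (σ (Fin.castLE hk j)) = y j then μ z else 0)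
        / log d = min (k : ℝ) H)
    {S : Finset (Fin N)} (hS : S.Nonempty) :
    entropy (margin μ S) / log d = min (#S : ℝ) H := by
  have hk : #S ≤ N := by simpa using card_le_univ S
  let e := S.orderIsoOfFin rfl
  obtain ⟨σ, hσ⟩ := Fin.exists_perm_castLE_eq hk (S.orderEmbOfFin rfl).toEmbedding
  have hmargin : (fun y : Fin #S → Fin d => ∑ z : Fin N → Fin d,
      if ∀ j : Fin #S, z (σ (Fin.castLE hk j)) = y j then μ z else 0)
      = pushforward μ ((fun y => y ∘ e) ∘ S.restrict) := by
    funext y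
    refine sum_congr rfl fun z _ => if_congr ?_ rfl rfl
    simp [hσ, funext_iff, e]
  rw [← hyp σ #S (card_pos.2 hS) hk, hmargin, margin_eq_pushforward,
    entropy_pushforward_comp_of_injective _ _ e.surjective.injective_comp_right]

end Margins

lemma card_le_of_pairs_separate {γ : Type*} [DecidableEq γ] {d N : ℕ} {t : Finset γ}
    {W : Finset (Fin N)} (hW : d ^ #t < #W) (Z : γ → Fin N → Fin d)
    (hsep : ∀ w ∈ W, ∀ w' ∈ W, w ≠ w' → ∀ c ∈ t, ∀ c' ∈ t,
      Z c w = Z c' w → Z c w' = Z c' w' → c = c') : #t ≤ d := by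
  have hcard : #(univ : Finset (t → Fin d)) < #W := by simpa using hW
  obtain ⟨w, hw, w', hw', hww', hcol⟩ := exists_ne_map_eq_of_card_lt_of_maps_to hcard
    (f := fun w (c : t) => Z c w) fun _ _ => mem_univ _
  have hinj : Set.InjOn (fun c => Z c w) t := fun c hc c' hc' hcw =>
    hsep w hw w' hw' hww' c hc c' hc' hcw
      ((congrFun hcol ⟨c, hc⟩).symm.trans (hcw.trans (congrFun hcol ⟨c', hc'⟩)))
  simpa using card_le_card_of_injOn _ (fun _ _ => mem_univ _) hinj

section Exchangeable

variable {d N : ℕ} {μ : (Fin N → Fin d) → ℝ}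

lemma restrict_eq_of_entropy_margin_union_eq (hμ : ∀ z, 0 ≤ μ z) {B P : Finset (Fin N)}
    (hBP : entropy (margin μ (B ∪ P)) = entropy (margin μ B)) {z z' : Fin N → Fin d}
    (hz : μ z ≠ 0) (hz' : μ z' ≠ 0) (hB : B.restrict z = B.restrict z') :
    P.restrict z = P.restrict z' := by
  refine eq_of_entropy_pair_eq hμ B.restrict P.restrict ?_ hz hz' hB
  rw [entropy_pushforward_restrict_pair, ← margin_eq_pushforward, hBP]

theorem card_le_of_entropy_margin_eq {H : ℝ} (hd : 2 ≤ d) (hμ : IsPMF μ)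
    (hent : ∀ S : Finset (Fin N), S.Nonempty → entropy (margin μ S) / log d = min (#S : ℝ) H)
    {r : ℕ} (hr : 1 ≤ r) (hrH : r + 1 < H) (hHr : H ≤ r + 2) :
    N ≤ r + 2 + d ^ (d * d) := by
  by_contra! hN
  have hlog : 0 < log d := log_pos (by exact_mod_cast hd)
  have hlarge {S : Finset (Fin N)} (hS : r + 2 ≤ #S) : entropy (margin μ S) = H * log d := by
    rw [← div_eq_iff hlog.ne', hent S (card_pos.1 (by omega)), min_eq_right]
    exact hHr.trans (by exact_mod_cast hS)
  obtain ⟨A, -, hA⟩ := exists_subset_card_eq (s := (univ : Finset (Fin N))) (n := r)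
    (by simp; omega)
  obtain ⟨P, hPA, hP⟩ := exists_subset_card_eq (s := Aᶜ) (n := 2)
    (by simp [card_compl, hA]; omega)
  have hAP : Disjoint A P := disjoint_left.2 fun i hiA hiP => mem_compl.1 (hPA hiP) hiA
  have hgap : entropy (pushforward μ A.restrict) + log d
      < entropy (pushforward μ fun z => (A.restrict z, P.restrict z)) := by
    have hAent := hent A (card_pos.1 (by omega))
    rw [div_eq_iff hlog.ne', hA, min_eq_left (by linarith)] at hAent
    rw [← margin_eq_pushforward, entropy_pushforward_restrict_pair, hAent,
      hlarge (by rw [card_union_of_disjoint hAP]; omega)]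
    nlinarith
  obtain ⟨b, t, hdt, hfiber⟩ := exists_large_fiber hμ A.restrict P.restrict (by omega) hgap
  have : Nonempty (Fin d) := ⟨⟨0, by omega⟩⟩
  choose! Z hZμ hZA hZP using hfiber
  have hW : d ^ #t < #(A ∪ P)ᶜ := by
    have ht : #t ≤ d * d := by simpa [hP, sq] using card_le_univ t
    rw [card_compl, card_union_of_disjoint hAP, hA, hP, Fintype.card_fin]
    have := Nat.pow_le_pow_right (by omega : 0 < d) ht
    omega
  refine hdt.not_ge <| card_le_of_pairs_separate hW Z
    fun w hw w' hw' hww' c hc c' hc' hcw hcw' => ?_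
  simp only [mem_compl, mem_union, not_or] at hw hw'
  have hB : r + 2 ≤ #(A ∪ {w, w'}) := by
    rw [card_union_of_disjoint (by simp [hw.1, hw'.1]), card_pair hww', hA]
  have hBeq : (A ∪ {w, w'}).restrict (Z c) = (A ∪ {w, w'}).restrict (Z c') := by
    funext ⟨i, hi⟩
    rcases mem_union.1 hi with hiA | hiw
    · exact congrFun ((hZA c hc).trans (hZA c' hc').symm) ⟨i, hiA⟩
    · rcases mem_insert.1 hiw with rfl | hiw
      · exact hcw
      · obtain rfl := mem_singleton.1 hiw
        exact hcw'
  rw [← hZP c hc, ← hZP c' hc']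
  refine restrict_eq_of_entropy_margin_union_eq hμ.1 ?_ (hZμ c hc) (hZμ c' hc') hBeq
  rw [hlarge hB, hlarge (hB.trans (card_le_card subset_union_left))]

end Exchangeable

/-- for each `d ≥ 2` there is a finite constant `H_*(d)` such that whenever
`Y_1,…,Y_N` are `{0,…,d−1}`-valued random variables (with joint law `μ`) such that
`H(Y_{σ(1)},…,Y_{σ(k)})/log d = min{k, H}` for every permutation `σ` and every
`k = 1,…,N`, then `H ≤ H_*(d)` or `N − H ≤ H_*(d)`. -/
theorem stmt13 (d : ℕ) (hd : 2 ≤ d) :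
    ∃ Hstar : ℝ, ∀ N : ℕ, 1 ≤ N → ∀ H : ℝ, H ∈ Set.Icc (0:ℝ) N →
      ∀ μ : (Fin N → Fin d) → ℝ, IsPMF μ →
      (∀ σ : Equiv.Perm (Fin N), ∀ k : ℕ, 1 ≤ k → ∀ hk : k ≤ N,
        entropy (fun y : Fin k → Fin d =>
            ∑ z : Fin N → Fin d,
              if ∀ j : Fin k, z (σ (Fin.castLE hk j)) = y j then μ z else 0)
          / Real.log d = min (k : ℝ) H) →
      H ≤ Hstar ∨ (N : ℝ) - H ≤ Hstar := by
  refine ⟨d ^ (d * d) + 2, fun N _ H hH μ hμ hyp => ?_⟩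
  by_cases hHsmall : H ≤ d ^ (d * d) + 2
  · exact Or.inl hHsmall
  right
  have hH2 : (2 : ℝ) < H := (le_add_of_nonneg_left (by positivity)).trans_lt (not_le.1 hHsmall)
  have hceil3 : 2 < ⌈H⌉₊ := Nat.lt_ceil.2 (by exact_mod_cast hH2)
  obtain ⟨r, hr⟩ : ∃ r : ℕ, ⌈H⌉₊ = r + 2 := ⟨⌈H⌉₊ - 2, by omega⟩
  have hceil : (⌈H⌉₊ : ℝ) = r + 2 := by exact_mod_cast hr
  have hceil_lt := Nat.ceil_lt_add_one hH.1
  have hN := card_le_of_entropy_margin_eq hd hμ (fun S hS => entropy_margin_div_log_eq hyp hS)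
    (r := r) (by omega) (by linarith) (by linarith [Nat.le_ceil H])
  have hN' : (N : ℝ) ≤ r + 2 + d ^ (d * d) := by exact_mod_cast hN
  linarith
end

section
/- Let d ≥ 2, N ≥ 1, 0 ≤ M ≤ N, and let μ^{N,M} be the random probability measure of the sparse random construction. For k = 1,…,N let h_k := (1/log d) · E[ H(ν_k) ], where ν_k is the image of μ^{N,M} under the projection of Λ_{d,N} onto the first k coordinates. Then: (i) for 1 ≤ k ≤ M, k − 2 d^{(k−M)/2} ≤ h_k ≤ k; (ii) for M < k ≤ N, M − d^{M−k} ≤ h_k ≤ M. -/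
open Filter

open MeasureTheory ProbabilityTheory

/-- The (random) empirical measure `μ^{N,M}` of the sparse random construction:
`μ^{N,M}(v) = d^{−M} ∑_{i ∈ Λ_{d,M}} 1{v = w_i}`. -/
noncomputable def sparseMu (d : ℕ) {M N : ℕ} (w : (Fin M → Fin d) → (Fin N → Fin d)) :
    (Fin N → Fin d) → ℝ :=
  fun v => ((Finset.univ.filter (fun i : Fin M → Fin d => w i = v)).card : ℝ) / (d ^ M : ℝ)


/-!
Let `ν` be the empirical measure of the `D = d^M` projected samples `W i ∘ Fin.castLE hk`,
which are pairwise independent and uniform on `n = d^k` points. Each `ν y` has mean `1/n` and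
second moment at most `1/(nD) + 1/n²`, so a pointwise bound `-x log x ≥ a x - b x²` with `b ≥ 0`
gives `E[H(ν)] ≥ a - b (1/D + 1/n)`. The tangent bound `log (n x) ≤ n x - 1` yields
`log n - n/D`, the useful one for `k ≤ M`; since `ν` takes values in `ℕ/D`, the bound
`log c ≤ (c - 1) log 2` yields `log D - log 2 · D/n`, the useful one for `M < k`. The upper
bounds hold because `ν` is supported on at most `min n D` points.
-/

open Finset Real

section Entropy

variable {α : Type*} [Fintype α]

lemma entropy_eq_sum_negMulLog (q : α → ℝ) : entropy q = ∑ x, negMulLog (q x) := by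
  simp [entropy, negMulLog]

lemma entropy_le_log_card_of_support_subset {q : α → ℝ} (hq0 : ∀ x, 0 ≤ q x)
    (hq1 : ∑ x, q x = 1) {S : Finset α} (hS : ∀ x ∉ S, q x = 0) : entropy q ≤ log #S := by
  have hsum : ∑ x ∈ S, q x = 1 := by
    rw [← hq1, Finset.sum_subset (subset_univ S) fun x _ hx => hS x hx]
  have hcard : (0 : ℝ) < #S := by
    have hne : S.Nonempty := nonempty_of_sum_ne_zero (by rw [hsum]; exact one_ne_zero)
    exact_mod_cast hne.card_pos
  have hjensen := concaveOn_negMulLog.le_map_sum (t := S) (w := fun _ => (#S : ℝ)⁻¹) (p := q)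
    (fun _ _ => by positivity) (by simp [hcard.ne']) fun x _ => Set.mem_Ici.2 (hq0 x)
  have hinv : negMulLog (#S : ℝ)⁻¹ = (#S : ℝ)⁻¹ * log #S := by simp [negMulLog, log_inv]
  simp only [smul_eq_mul, ← mul_sum, hsum, mul_one, hinv] at hjensen
  rw [entropy_eq_sum_negMulLog,
    ← Finset.sum_subset (subset_univ S) fun x _ hx => by rw [hS x hx, negMulLog_zero]]
  exact le_of_mul_le_mul_left hjensen (inv_pos.2 hcard)

end Entropy

lemma le_negMulLog_of_pos {q x : ℝ} (hq : 0 < q) (hx : 0 ≤ x) :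
    (1 - log q) * x - q⁻¹ * x ^ 2 ≤ negMulLog x := by
  rcases hx.eq_or_lt with rfl | hx
  · simp
  have h := mul_le_mul_of_nonneg_left (log_le_sub_one_of_pos (div_pos hx hq)) hx.le
  rw [log_div hx.ne' hq.ne'] at h
  have hsq : x * (x / q) = q⁻¹ * x ^ 2 := by ring
  rw [negMulLog]
  linear_combination h + hsq

lemma natCast_le_two_pow_pred (c : ℕ) : (c : ℝ) ≤ 2 ^ (c - 1) := by
  have := Nat.lt_two_pow_self (n := c - 1)
  exact_mod_cast (by omega : c ≤ 2 ^ (c - 1))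

lemma le_negMulLog_natCast_div (c : ℕ) {D : ℝ} (hD : 0 < D) :
    (log D + log 2) * (c / D) - D * log 2 * (c / D) ^ 2 ≤ negMulLog (c / D) := by
  rcases Nat.eq_zero_or_pos c with rfl | hc
  · simp
  have hc' : (0 : ℝ) < c := by exact_mod_cast hc
  have hlog : log c ≤ (c - 1) * log 2 := by
    have := log_le_log hc' (natCast_le_two_pow_pred c)
    rwa [log_pow, Nat.cast_sub hc, Nat.cast_one] at this
  have h := mul_le_mul_of_nonneg_left hlog (by positivity : (0 : ℝ) ≤ c / D)
  have hsq : D * (c / D) ^ 2 = c / D * c := by field_simp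
  rw [negMulLog, log_div hc'.ne' hD.ne']
  linear_combination h - log 2 * hsq

section Empirical

variable {ι α : Type*} [Fintype ι] [DecidableEq α]

noncomputable def empirical (x : ι → α) (y : α) : ℝ := #{i | x i = y} / Fintype.card ι

lemma empirical_eq_sum_ite (x : ι → α) (y : α) :
    empirical x y = (Fintype.card ι : ℝ)⁻¹ * ∑ i, if x i = y then 1 else 0 := by
  rw [empirical, sum_boole, div_eq_inv_mul]

lemma empirical_nonneg (x : ι → α) (y : α) : 0 ≤ empirical x y := by
  unfold empirical; positivity

lemma sum_ite_empirical {β : Type*} [Fintype β] [DecidableEq β] (f : β → α) (x : ι → β)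
    (y : α) : ∑ v, (if f v = y then empirical x v else 0) = empirical (f ∘ x) y := by
  rw [← sum_filter]
  simp only [empirical_eq_sum_ite, ← mul_sum]
  rw [sum_comm]
  simp

lemma empirical_comp_eq_sum_indicator {Ω : Type*} (X : ι → Ω → α) (y : α) (ω : Ω) :
    empirical (fun i => X i ω) y = (Fintype.card ι : ℝ)⁻¹ * ∑ i, (X i ⁻¹' {y}).indicator 1 ω := by
  rw [empirical_eq_sum_ite]
  congr 1
  refine sum_congr rfl fun i _ => ?_
  by_cases h : X i ω = y <;> simp [h]

variable [Fintype α] [Nonempty ι]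

lemma sum_empirical (x : ι → α) : ∑ y, empirical x y = 1 := by
  simp only [empirical_eq_sum_ite, ← mul_sum]
  rw [sum_comm]
  simp

lemma entropy_empirical_le_log_card (x : ι → α) :
    entropy (empirical x) ≤ log (Fintype.card α) :=
  entropy_le_log_card_of_support_subset (empirical_nonneg x) (sum_empirical x) (S := univ)
    (by simp)

lemma entropy_empirical_le_log_card_index (x : ι → α) :
    entropy (empirical x) ≤ log (Fintype.card ι) := by
  have hS : ∀ y ∉ univ.image x, empirical x y = 0 := by
    intro y hy
    rw [empirical,
      filter_eq_empty_iff.2 fun i _ (hi : x i = y) => hy (hi ▸ mem_image_of_mem x (mem_univ i))]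
    simp
  refine (entropy_le_log_card_of_support_subset (empirical_nonneg x) (sum_empirical x) hS).trans ?_
  exact log_le_log (by simp) (by exact_mod_cast card_image_le)

end Empirical

section Sample

variable {Ω ι α : Type*} [MeasurableSpace Ω] {P : Measure Ω} [IsProbabilityMeasure P]
  [Fintype ι] [MeasurableSpace α] [MeasurableSingletonClass α] {X : ι → Ω → α}

lemma integrable_comp_sample [Finite α] (hX : ∀ i, Measurable (X i)) (F : (ι → α) → ℝ) :
    Integrable (fun ω => F fun i => X i ω) P :=
  Integrable.of_finite.comp_measurable (measurable_pi_lambda _ hX)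

variable [DecidableEq α]

lemma integral_entropy_empirical_le [Fintype α] (hX : ∀ i, Measurable (X i)) {c : ℝ}
    (hc : ∀ x : ι → α, entropy (empirical x) ≤ c) :
    ∫ ω, entropy (empirical fun i => X i ω) ∂P ≤ c := by
  calc ∫ ω, entropy (empirical fun i => X i ω) ∂P ≤ ∫ _ω, c ∂P :=
        integral_mono (integrable_comp_sample hX fun x => entropy (empirical x))
          (integrable_const c) fun ω => hc _
    _ = c := by simp

variable [Nonempty ι]

lemma integral_empirical (hX : ∀ i, Measurable (X i)) {y : α} {p : ℝ}
    (hp : ∀ i, P.real (X i ⁻¹' {y}) = p) : ∫ ω, empirical (fun i => X i ω) y ∂P = p := by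
  have hA : ∀ i, MeasurableSet (X i ⁻¹' {y}) := fun i => hX i (measurableSet_singleton y)
  have hint : ∀ i, Integrable ((X i ⁻¹' {y}).indicator (1 : Ω → ℝ)) P :=
    fun i => (integrable_const (1 : ℝ)).indicator (hA i)
  simp_rw [empirical_comp_eq_sum_indicator]
  rw [integral_const_mul, integral_finsetSum _ fun i _ => hint i]
  simp [integral_indicator_one (hA _), hp]

lemma integral_empirical_sq_le (hX : ∀ i, Measurable (X i))
    (hind : Pairwise fun i j => IndepFun (X i) (X j) P) {y : α} {p : ℝ}
    (hp : ∀ i, P.real (X i ⁻¹' {y}) = p) :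
    ∫ ω, empirical (fun i => X i ω) y ^ 2 ∂P ≤ p / Fintype.card ι + p ^ 2 := by
  classical
  set A : ι → Set Ω := fun i => X i ⁻¹' {y}
  have hA : ∀ i, MeasurableSet (A i) := fun i => hX i (measurableSet_singleton y)
  have hsq : ∀ ω, empirical (fun i => X i ω) y ^ 2 =
      ((Fintype.card ι : ℝ)⁻¹) ^ 2 * ∑ i, ∑ j, (A i ∩ A j).indicator 1 ω := by
    intro ω
    rw [empirical_comp_eq_sum_indicator, mul_pow, sq (∑ i, _), sum_mul_sum]
    simp [Set.inter_indicator_one, A]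
  have hpair : ∀ i j, P.real (A i ∩ A j) ≤ p ^ 2 + if i = j then p else 0 := by
    intro i j
    rcases eq_or_ne i j with rfl | hij
    · simp only [Set.inter_self, hp, if_pos, le_add_iff_nonneg_left, A]
      positivity
    · rw [if_neg hij, add_zero, measureReal_def,
        (hind hij).measure_inter_preimage_eq_mul _ _ (measurableSet_singleton y)
          (measurableSet_singleton y), ENNReal.toReal_mul, ← measureReal_def, ← measureReal_def,
        hp, hp, sq]
  calc ∫ ω, empirical (fun i => X i ω) y ^ 2 ∂P
      = ((Fintype.card ι : ℝ)⁻¹) ^ 2 * ∑ i, ∑ j, P.real (A i ∩ A j) := by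
        have hint : ∀ i j, Integrable ((A i ∩ A j).indicator (1 : Ω → ℝ)) P :=
          fun i j => (integrable_const (1 : ℝ)).indicator ((hA i).inter (hA j))
        simp_rw [hsq]
        rw [integral_const_mul,
          integral_finsetSum _ fun i _ => integrable_finsetSum _ fun j _ => hint i j]
        congr 1
        refine sum_congr rfl fun i _ => ?_
        rw [integral_finsetSum _ fun j _ => hint i j]
        exact sum_congr rfl fun j _ => integral_indicator_one ((hA i).inter (hA j))
    _ ≤ ((Fintype.card ι : ℝ)⁻¹) ^ 2 * ∑ i : ι, ∑ j : ι, (p ^ 2 + if i = j then p else 0) := by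
        gcongr with i _ j _
        exact hpair i j
    _ = p / Fintype.card ι + p ^ 2 := by
        have : (Fintype.card ι : ℝ) ≠ 0 := by positivity
        simp only [sum_add_distrib, sum_const, card_univ, nsmul_eq_mul, sum_ite_eq, mem_univ,
          if_true]
        field_simp
        ring

lemma le_integral_negMulLog_empirical [Fintype α] (hX : ∀ i, Measurable (X i))
    (hind : Pairwise fun i j => IndepFun (X i) (X j) P) {y : α} {p : ℝ}
    (hp : ∀ i, P.real (X i ⁻¹' {y}) = p) {a b : ℝ} (hb : 0 ≤ b)
    (hφ : ∀ x : ι → α, a * empirical x y - b * empirical x y ^ 2 ≤ negMulLog (empirical x y)) :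
    a * p - b * (p / Fintype.card ι + p ^ 2) ≤
      ∫ ω, negMulLog (empirical (fun i => X i ω) y) ∂P := by
  have hν := integrable_comp_sample (P := P) hX fun x => empirical x y
  have hν2 := integrable_comp_sample (P := P) hX fun x => empirical x y ^ 2
  calc a * p - b * (p / Fintype.card ι + p ^ 2)
      ≤ a * ∫ ω, empirical (fun i => X i ω) y ∂P
          - b * ∫ ω, empirical (fun i => X i ω) y ^ 2 ∂P := by
        rw [integral_empirical hX hp]
        gcongr
        exact integral_empirical_sq_le hX hind hp
    _ = ∫ ω, a * empirical (fun i => X i ω) y - b * empirical (fun i => X i ω) y ^ 2 ∂P := by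
        rw [integral_sub (hν.const_mul a) (hν2.const_mul b), integral_const_mul,
          integral_const_mul]
    _ ≤ ∫ ω, negMulLog (empirical (fun i => X i ω) y) ∂P :=
        integral_mono ((hν.const_mul a).sub (hν2.const_mul b))
          (integrable_comp_sample hX fun x => negMulLog (empirical x y)) fun ω => hφ _

lemma le_integral_entropy_empirical [Fintype α] [Nonempty α] (hX : ∀ i, Measurable (X i))
    (hind : Pairwise fun i j => IndepFun (X i) (X j) P)
    (hunif : ∀ i y, P.real (X i ⁻¹' {y}) = (Fintype.card α : ℝ)⁻¹) {a b : ℝ} (hb : 0 ≤ b)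
    (hφ : ∀ (x : ι → α) y, a * empirical x y - b * empirical x y ^ 2 ≤ negMulLog (empirical x y)) :
    a - b * ((Fintype.card ι : ℝ)⁻¹ + (Fintype.card α : ℝ)⁻¹) ≤
      ∫ ω, entropy (empirical fun i => X i ω) ∂P := by
  have hα : (Fintype.card α : ℝ) ≠ 0 := by positivity
  simp_rw [entropy_eq_sum_negMulLog]
  rw [integral_finsetSum _ fun y _ => integrable_comp_sample hX fun x => negMulLog (empirical x y)]
  calc a - b * ((Fintype.card ι : ℝ)⁻¹ + (Fintype.card α : ℝ)⁻¹)
      = ∑ _y : α, (a * (Fintype.card α : ℝ)⁻¹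
          - b * ((Fintype.card α : ℝ)⁻¹ / Fintype.card ι + ((Fintype.card α : ℝ)⁻¹) ^ 2)) := by
        rw [sum_const, card_univ, nsmul_eq_mul]
        field_simp
    _ ≤ _ := sum_le_sum fun y _ => le_integral_negMulLog_empirical hX hind (hunif · y) hb (hφ · y)

variable [Fintype α] [Nonempty α]

theorem log_card_sub_le_integral_entropy_empirical (hX : ∀ i, Measurable (X i))
    (hind : Pairwise fun i j => IndepFun (X i) (X j) P)
    (hunif : ∀ i y, P.real (X i ⁻¹' {y}) = (Fintype.card α : ℝ)⁻¹) :
    log (Fintype.card α) - Fintype.card α / Fintype.card ι ≤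
      ∫ ω, entropy (empirical fun i => X i ω) ∂P := by
  have hα : (0 : ℝ) < Fintype.card α := by positivity
  convert le_integral_entropy_empirical hX hind hunif (inv_pos.2 (inv_pos.2 hα)).le
    fun x y => le_negMulLog_of_pos (inv_pos.2 hα) (empirical_nonneg x y) using 1
  rw [log_inv]
  field_simp
  ring

theorem log_card_index_sub_le_integral_entropy_empirical (hX : ∀ i, Measurable (X i))
    (hind : Pairwise fun i j => IndepFun (X i) (X j) P)
    (hunif : ∀ i y, P.real (X i ⁻¹' {y}) = (Fintype.card α : ℝ)⁻¹) :
    log (Fintype.card ι) - log 2 * (Fintype.card ι / Fintype.card α) ≤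
      ∫ ω, entropy (empirical fun i => X i ω) ∂P := by
  have hι : (0 : ℝ) < Fintype.card ι := by positivity
  convert le_integral_entropy_empirical hX hind hunif (by positivity)
    fun x y => le_negMulLog_natCast_div _ hι using 1
  field_simp
  ring

end Sample

lemma card_filter_comp_castLE_eq {β : Type*} [Fintype β] [DecidableEq β] {k N : ℕ}
    (hk : k ≤ N) (y : Fin k → β) :
    #{v : Fin N → β | v ∘ Fin.castLE hk = y} = Fintype.card β ^ (N - k) := by
  have hfib : ({v : Fin N → β | v ∘ Fin.castLE hk = y} : Finset _) =
      Fintype.piFinset fun i : Fin N =>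
        (if h : (i : ℕ) < k then {y ⟨i, h⟩} else univ : Finset β) := by
    ext v
    simp only [mem_filter, mem_univ, true_and, Fintype.mem_piFinset, funext_iff,
      Function.comp_apply]
    refine ⟨fun h a => ?_, fun h x => by simpa [x.isLt] using h (Fin.castLE hk x)⟩
    split_ifs with ha
    · simpa using h ⟨a, ha⟩
    · exact mem_univ _
  rw [hfib, Fintype.card_piFinset]
  obtain ⟨m, rfl⟩ := Nat.exists_eq_add_of_le hk
  rw [Fin.prod_univ_eq_prod_range (fun i => #(if h : i < k then {y ⟨i, h⟩} else univ)),
    prod_range_add, prod_eq_one fun i hi => by simp [mem_range.1 hi]]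
  simp

lemma measureReal_preimage_comp_castLE {Ω β : Type*} [MeasurableSpace Ω] {P : Measure Ω}
    [IsFiniteMeasure P] [Fintype β] [Nonempty β] [DecidableEq β] [MeasurableSpace β]
    [MeasurableSingletonClass β] {k N : ℕ} (hk : k ≤ N) {W : Ω → Fin N → β} (hW : Measurable W)
    (hunif : ∀ v, P {ω | W ω = v} = ((Fintype.card β : ENNReal) ^ N)⁻¹) (y : Fin k → β) :
    P.real ((fun ω => W ω ∘ Fin.castLE hk) ⁻¹' {y}) = ((Fintype.card β : ℝ) ^ k)⁻¹ := by
  have hset : (fun ω => W ω ∘ Fin.castLE hk) ⁻¹' {y} =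
      W ⁻¹' ↑({v : Fin N → β | v ∘ Fin.castLE hk = y} : Finset _) := by
    ext ω; simp
  have hβ : (0 : ℝ) < Fintype.card β := by positivity
  rw [hset, ← sum_measureReal_preimage_singleton _ fun v _ => hW (measurableSet_singleton v)]
  simp only [measureReal_def, Set.preimage, Set.mem_singleton_iff, hunif, sum_const,
    card_filter_comp_castLE_eq, nsmul_eq_mul, ENNReal.toReal_natCast,
    ENNReal.toReal_inv, ENNReal.toReal_pow, Nat.cast_pow, pow_sub₀ _ hβ.ne' hk]
  field_simp

lemma sparseMu_eq_empirical {d M N : ℕ} (w : (Fin M → Fin d) → Fin N → Fin d) :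
    sparseMu d w = empirical w := by
  ext v
  simp [sparseMu, empirical]

lemma sum_ite_sparseMu_eq_empirical {d M N k : ℕ} (hk : k ≤ N)
    (w : (Fin M → Fin d) → Fin N → Fin d) :
    (fun y : Fin k → Fin d => ∑ v : Fin N → Fin d,
        if ∀ j : Fin k, v (Fin.castLE hk j) = y j then sparseMu d w v else 0)
      = empirical (fun i => w i ∘ Fin.castLE hk) := by
  ext y
  have hcond : ∀ v : Fin N → Fin d, (∀ j, v (Fin.castLE hk j) = y j) ↔ v ∘ Fin.castLE hk = y :=
    fun v => funext_iff.symm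
  simp only [hcond, sparseMu_eq_empirical]
  exact sum_ite_empirical (· ∘ Fin.castLE hk) w y

lemma dense_regime_bounds {d E : ℝ} {k M : ℕ} (hd : 2 ≤ d) (hkM : k ≤ M)
    (hlow : k * log d - d ^ k / d ^ M ≤ E) (hup : E ≤ k * log d) :
    k - 2 * d ^ (((k : ℝ) - M) / 2) ≤ 1 / log d * E ∧ 1 / log d * E ≤ k := by
  have hL : 0 < log d := log_pos (by linarith)
  set t := d ^ (((k : ℝ) - M) / 2)
  have ht1 : t ≤ 1 := rpow_le_one_of_one_le_of_nonpos (by linarith) (by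
    have : (k : ℝ) ≤ M := by exact_mod_cast hkM
    linarith)
  have htt : d ^ k / d ^ M = t * t := by
    rw [← rpow_add (by positivity), add_halves, rpow_sub (by positivity), rpow_natCast,
      rpow_natCast]
  have hlog : 1 ≤ 2 * log d := by
    have := log_le_log (by norm_num) hd
    linarith [log_two_gt_d9]
  rw [one_div, inv_mul_eq_div, le_div_iff₀ hL, div_le_iff₀ hL]
  refine ⟨?_, hup⟩
  nlinarith [show 0 < t by positivity]

lemma sparse_regime_bounds {d E : ℝ} {k M : ℕ} (hd : 2 ≤ d)
    (hlow : M * log d - log 2 * (d ^ M / d ^ k) ≤ E) (hup : E ≤ M * log d) :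
    M - d ^ ((M : ℝ) - k) ≤ 1 / log d * E ∧ 1 / log d * E ≤ M := by
  have hL : 0 < log d := log_pos (by linarith)
  rw [← rpow_natCast, ← rpow_natCast, ← rpow_sub (by positivity)] at hlow
  have := mul_le_mul_of_nonneg_right (log_le_log (by norm_num) hd)
    (by positivity : (0 : ℝ) ≤ d ^ ((M : ℝ) - k))
  rw [one_div, inv_mul_eq_div, le_div_iff₀ hL, div_le_iff₀ hL]
  exact ⟨by linarith, hup⟩

theorem stmt15_general (d N M : ℕ) (hd : 2 ≤ d)
    (Ω : Type*) [MeasurableSpace Ω] (P : Measure Ω) [IsProbabilityMeasure P]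
    (W : (Fin M → Fin d) → Ω → (Fin N → Fin d))
    (hmeas : ∀ i, Measurable (W i))
    (hiid : iIndepFun W P)
    (hunif : ∀ i (v : Fin N → Fin d), P {ω | W i ω = v} = ((d : ENNReal) ^ N)⁻¹) :
    ∀ k : ℕ, 1 ≤ k → ∀ hk : k ≤ N,
      (k ≤ M →
        (k : ℝ) - 2 * (d : ℝ) ^ (((k : ℝ) - M) / 2) ≤
          (1 / Real.log d) * ∫ ω, entropy (fun y : Fin k → Fin d =>
            ∑ v : Fin N → Fin d,
              if ∀ j : Fin k, v (Fin.castLE hk j) = y j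
              then sparseMu d (fun i => W i ω) v else 0) ∂P ∧
        (1 / Real.log d) * ∫ ω, entropy (fun y : Fin k → Fin d =>
            ∑ v : Fin N → Fin d,
              if ∀ j : Fin k, v (Fin.castLE hk j) = y j
              then sparseMu d (fun i => W i ω) v else 0) ∂P ≤ (k : ℝ)) ∧
      (M < k →
        (M : ℝ) - (d : ℝ) ^ ((M : ℝ) - k) ≤
          (1 / Real.log d) * ∫ ω, entropy (fun y : Fin k → Fin d =>
            ∑ v : Fin N → Fin d,
              if ∀ j : Fin k, v (Fin.castLE hk j) = y j
              then sparseMu d (fun i => W i ω) v else 0) ∂P ∧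
        (1 / Real.log d) * ∫ ω, entropy (fun y : Fin k → Fin d =>
            ∑ v : Fin N → Fin d,
              if ∀ j : Fin k, v (Fin.castLE hk j) = y j
              then sparseMu d (fun i => W i ω) v else 0) ∂P ≤ (M : ℝ)) := by
  intro k _ hk
  simp only [sum_ite_sparseMu_eq_empirical hk]
  set E := ∫ ω, entropy (empirical fun i => W i ω ∘ Fin.castLE hk) ∂P
  have : Nonempty (Fin d) := ⟨⟨0, by omega⟩⟩
  have hπ : Measurable fun v : Fin N → Fin d => v ∘ Fin.castLE hk := .of_discrete
  have hX : ∀ i, Measurable fun ω => W i ω ∘ Fin.castLE hk := fun i => hπ.comp (hmeas i)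
  have hind : Pairwise fun i j =>
      IndepFun (fun ω => W i ω ∘ Fin.castLE hk) (fun ω => W j ω ∘ Fin.castLE hk) P :=
    fun i j hij => (hiid.indepFun hij).comp hπ hπ
  have hunifX : ∀ i y, P.real ((fun ω => W i ω ∘ Fin.castLE hk) ⁻¹' {y}) =
      (Fintype.card (Fin k → Fin d) : ℝ)⁻¹ := by
    intro i y
    rw [measureReal_preimage_comp_castLE hk (hmeas i) (by simpa using hunif i)]
    simp
  have hdense : k * log d - d ^ k / d ^ M ≤ E := by
    simpa using log_card_sub_le_integral_entropy_empirical hX hind hunifX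
  have hsparse : M * log d - log 2 * (d ^ M / d ^ k) ≤ E := by
    simpa using log_card_index_sub_le_integral_entropy_empirical hX hind hunifX
  have hle_k : E ≤ k * log d := by
    simpa using integral_entropy_empirical_le (P := P) hX entropy_empirical_le_log_card
  have hle_M : E ≤ M * log d := by
    simpa using integral_entropy_empirical_le (P := P) hX entropy_empirical_le_log_card_index
  have hd' : (2 : ℝ) ≤ d := by exact_mod_cast hd
  exact ⟨fun hkM => dense_regime_bounds hd' hkM hdense hle_k,
    fun _ => sparse_regime_bounds hd' hsparse hle_M⟩

/-- for the sparse random construction with `0 ≤ M ≤ N`, letting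
`h_k = (1/log d) E[H(ν_k)]` where `ν_k` is the marginal of `μ^{N,M}` on the first `k`
coordinates: (i) `k − 2 d^{(k−M)/2} ≤ h_k ≤ k` for `1 ≤ k ≤ M`;
(ii) `M − d^{M−k} ≤ h_k ≤ M` for `M < k ≤ N`. -/
theorem stmt15 (d N M : ℕ) (hd : 2 ≤ d) (hN : 1 ≤ N) (hM : M ≤ N)
    (Ω : Type*) [MeasurableSpace Ω] (P : Measure Ω) [IsProbabilityMeasure P]
    (W : (Fin M → Fin d) → Ω → (Fin N → Fin d))
    (hmeas : ∀ i, Measurable (W i))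
    (hiid : iIndepFun W P)
    (hunif : ∀ i (v : Fin N → Fin d), P {ω | W i ω = v} = ((d : ENNReal) ^ N)⁻¹) :
    ∀ k : ℕ, 1 ≤ k → ∀ hk : k ≤ N,
      (k ≤ M →
        (k : ℝ) - 2 * (d : ℝ) ^ (((k : ℝ) - M) / 2) ≤
          (1 / Real.log d) * ∫ ω, entropy (fun y : Fin k → Fin d =>
            ∑ v : Fin N → Fin d,
              if ∀ j : Fin k, v (Fin.castLE hk j) = y j
              then sparseMu d (fun i => W i ω) v else 0) ∂P ∧
        (1 / Real.log d) * ∫ ω, entropy (fun y : Fin k → Fin d =>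
            ∑ v : Fin N → Fin d,
              if ∀ j : Fin k, v (Fin.castLE hk j) = y j
              then sparseMu d (fun i => W i ω) v else 0) ∂P ≤ (k : ℝ)) ∧
      (M < k →
        (M : ℝ) - (d : ℝ) ^ ((M : ℝ) - k) ≤
          (1 / Real.log d) * ∫ ω, entropy (fun y : Fin k → Fin d =>
            ∑ v : Fin N → Fin d,
              if ∀ j : Fin k, v (Fin.castLE hk j) = y j
              then sparseMu d (fun i => W i ω) v else 0) ∂P ∧
        (1 / Real.log d) * ∫ ω, entropy (fun y : Fin k → Fin d =>
            ∑ v : Fin N → Fin d,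
              if ∀ j : Fin k, v (Fin.castLE hk j) = y j
              then sparseMu d (fun i => W i ω) v else 0) ∂P ≤ (M : ℝ)) :=
  stmt15_general d N M hd Ω P W hmeas hiid hunif
end

section
/- Let d ≥ 2, and let λ be a probability measure on [0,1] invariant under t ↦ 1−t; set c^N_k := ∫_{[0,1]} t^k (1−t)^{N−k} λ(dt). Let x ∈ (0,1), α := d^{1/2} and, for each N, M := ⌊xN⌋. Then there exists a constant C > 0 such that for all N ≥ 1, ∑_{k=0}^N C(N,k) c^N_k α^{−|k−M|} ≤ C/√N. -/
/-! For `t ∈ [0,1]` the term `C(N,k) t^k (1-t)^(N-k)` is at most `1`, and by weighted AM-GM and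
Stirling's formula at most `(e / 2π) √(N / (k (N-k)))`; integrating against `λ` bounds
`C(N,k) c^N_k` the same way. Fix `ε > 0` with `2ε ≤ min x (1-x)`. When `|k - xN| ≤ εN` both `k`
and `N - k` are at least `εN`, so `C(N,k) c^N_k ≤ e / (2πε √N)`, while the weights
`α^(-|k-M|)` sum to at most `(1 + α⁻¹) / (1 - α⁻¹)`. For the other `k` the weight is at most
`α · α^(-εN)`, and `(N + 1) α^(-εN) = O(1/√N)`. -/

open MeasureTheory

/-- The coefficients `c^N_k = ∫ t^k (1−t)^{N−k} λ(dt)`. -/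
noncomputable def cNk (lam : Measure ℝ) (N k : ℕ) : ℝ :=
  ∫ t, t ^ k * (1 - t) ^ (N - k) ∂lam

open Real Finset
open scoped Nat

theorem pow_mul_one_sub_pow_le {k m : ℕ} (hk : 0 < k) (hm : 0 < m) {t : ℝ}
    (ht : t ∈ Set.Icc (0 : ℝ) 1) :
    t ^ k * (1 - t) ^ m ≤ ((k : ℝ) / (k + m)) ^ k * ((m : ℝ) / (k + m)) ^ m := by
  obtain ⟨ht0, ht1⟩ := ht
  set a : ℝ := k / (k + m)
  set b : ℝ := m / (k + m)
  have hn : (0 : ℝ) < k + m := by positivity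
  have ha : 0 < a := by positivity
  have hb : 0 < b := by positivity
  have hab : a + b = 1 := by simp only [a, b]; field_simp
  have hp₁ : 0 ≤ t / a := by positivity
  have hp₂ : 0 ≤ (1 - t) / b := div_nonneg (by linarith) hb.le
  have hgm : (t / a) ^ a * ((1 - t) / b) ^ b ≤ 1 := by
    simpa [mul_div_cancel₀, ha.ne', hb.ne'] using
      geom_mean_le_arith_mean2_weighted ha.le hb.le hp₁ hp₂ hab
  have hpow : (t / a) ^ k * ((1 - t) / b) ^ m ≤ 1 := by
    have hk' : a * (k + m) = k := by simp only [a]; field_simp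
    have hm' : b * (k + m) = m := by simp only [b]; field_simp
    calc (t / a) ^ k * ((1 - t) / b) ^ m
        = ((t / a) ^ a * ((1 - t) / b) ^ b) ^ (k + m : ℝ) := by
          rw [mul_rpow (by positivity) (by positivity), ← rpow_mul hp₁, ← rpow_mul hp₂, hk', hm',
            rpow_natCast, rpow_natCast]
      _ ≤ 1 := rpow_le_one (by positivity) hgm hn.le
  calc t ^ k * (1 - t) ^ m = a ^ k * b ^ m * ((t / a) ^ k * ((1 - t) / b) ^ m) := by
        rw [mul_mul_mul_comm, ← mul_pow, ← mul_pow, mul_div_cancel₀ _ ha.ne',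
          mul_div_cancel₀ _ hb.ne']
    _ ≤ a ^ k * b ^ m := mul_le_of_le_one_right (by positivity) hpow

theorem factorial_le_exp_one_mul_sqrt {n : ℕ} (hn : n ≠ 0) :
    (n ! : ℝ) ≤ exp 1 * √n * (n / exp 1) ^ n := by
  have hseq : Stirling.stirlingSeq n ≤ exp 1 / √2 := by
    obtain ⟨n, rfl⟩ := Nat.exists_eq_succ_of_ne_zero hn
    simpa [Stirling.stirlingSeq_one] using Stirling.stirlingSeq'_antitone (Nat.zero_le n)
  have hpos : 0 < √(2 * n) * (n / exp 1) ^ n := by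
    have : (0 : ℝ) < n := by exact_mod_cast Nat.pos_of_ne_zero hn
    positivity
  rw [Stirling.stirlingSeq, div_le_iff₀ hpos] at hseq
  calc (n ! : ℝ) ≤ exp 1 / √2 * (√(2 * n) * (n / exp 1) ^ n) := hseq
    _ = exp 1 * √n * (n / exp 1) ^ n := by
      rw [sqrt_mul zero_le_two]; field_simp

theorem choose_mul_pow_mul_pow_le {k m : ℕ} (hk : 0 < k) (hm : 0 < m) :
    ((k + m).choose k : ℝ) * (((k : ℝ) / (k + m)) ^ k * ((m : ℝ) / (k + m)) ^ m) ≤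
      exp 1 / (2 * π) * √((k + m) / (k * m)) := by
  have hkm : (k + m : ℕ) ≠ 0 := by omega
  have hfac := factorial_le_exp_one_mul_sqrt hkm
  have hk! := Stirling.le_factorial_stirling k
  have hm! := Stirling.le_factorial_stirling m
  push_cast at hfac
  have hk0 : (0 : ℝ) < k := by exact_mod_cast hk
  have hm0 : (0 : ℝ) < m := by exact_mod_cast hm
  rw [Nat.cast_choose ℝ (Nat.le_add_right k m), Nat.add_sub_cancel_left, div_mul_eq_mul_div]
  calc ((k + m)! : ℝ) * (((k : ℝ) / (k + m)) ^ k * ((m : ℝ) / (k + m)) ^ m) / (k ! * m !)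
      ≤ exp 1 * √(k + m) * ((k + m) / exp 1) ^ (k + m) *
          (((k : ℝ) / (k + m)) ^ k * ((m : ℝ) / (k + m)) ^ m) /
        (√(2 * π * k) * (k / exp 1) ^ k * (√(2 * π * m) * (m / exp 1) ^ m)) := by
        gcongr
    _ = exp 1 / (2 * π) * √((k + m) / (k * m)) := by
        have h2π : √(2 * π * k) * √(2 * π * m) = 2 * π * √(k * m) := by
          rw [← sqrt_mul (by positivity),
            show 2 * π * k * (2 * π * m) = (2 * π) ^ 2 * (k * m) by ring,
            sqrt_mul (by positivity), sqrt_sq (by positivity)]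
        have hpow : ((k + m : ℝ) / exp 1) ^ (k + m) * ((k / (k + m)) ^ k * (m / (k + m)) ^ m) =
            (k / exp 1) ^ k * (m / exp 1) ^ m := by
          rw [pow_add, mul_mul_mul_comm, ← mul_pow, ← mul_pow]
          congr 2 <;> field_simp
        rw [sqrt_div (by positivity), mul_mul_mul_comm _ (_ ^ k), h2π,
          mul_assoc _ (_ ^ (k + m)), hpow]
        field_simp

theorem choose_mul_pow_mul_one_sub_pow_le_div_sqrt {N k : ℕ} {ε : ℝ} (hε : 0 < ε) (hN : 0 < N)
    (hk : ε * N ≤ k) (hNk : ε * N ≤ N - k) {t : ℝ} (ht : t ∈ Set.Icc (0 : ℝ) 1) :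
    (N.choose k : ℝ) * (t ^ k * (1 - t) ^ (N - k)) ≤ exp 1 / (2 * π * ε) / √N := by
  have hεN : 0 < ε * N := by positivity
  have hkN : k ≤ N := by exact_mod_cast (show (k : ℝ) ≤ N by linarith)
  obtain ⟨m, rfl⟩ := Nat.exists_eq_add_of_le hkN
  push_cast at hk hNk hεN ⊢
  rw [Nat.add_sub_cancel_left]
  have hk0 : 0 < k := by exact_mod_cast hεN.trans_le hk
  have hm0 : 0 < m := by
    have : (0 : ℝ) < m := by linarith
    exact_mod_cast this
  have hratio : (k + m : ℝ) / (k * m) ≤ (1 / (ε * √(k + m))) ^ 2 := by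
    rw [div_pow, one_pow, mul_pow, sq_sqrt (by positivity), div_le_div_iff₀ (by positivity)
      (by positivity)]
    nlinarith [mul_le_mul hk (hNk.trans_eq (by ring : (k + m : ℝ) - k = m)) hεN.le (by positivity)]
  calc ((k + m).choose k : ℝ) * (t ^ k * (1 - t) ^ m)
      ≤ ((k + m).choose k : ℝ) * (((k : ℝ) / (k + m)) ^ k * ((m : ℝ) / (k + m)) ^ m) :=
        mul_le_mul_of_nonneg_left (pow_mul_one_sub_pow_le hk0 hm0 ht) (Nat.cast_nonneg _)
    _ ≤ exp 1 / (2 * π) * √((k + m) / (k * m)) := choose_mul_pow_mul_pow_le hk0 hm0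
    _ ≤ exp 1 / (2 * π) * (1 / (ε * √(k + m))) := by
        gcongr
        exact (sqrt_le_sqrt hratio).trans_eq (sqrt_sq (by positivity))
    _ = exp 1 / (2 * π * ε) / √(k + m) := by field_simp

theorem choose_mul_pow_mul_one_sub_pow_le_one {N k : ℕ} {t : ℝ} (ht : t ∈ Set.Icc (0 : ℝ) 1) :
    (N.choose k : ℝ) * (t ^ k * (1 - t) ^ (N - k)) ≤ 1 := by
  obtain ⟨ht0, ht1⟩ := ht
  rcases le_or_gt k N with hk | hk
  · calc (N.choose k : ℝ) * (t ^ k * (1 - t) ^ (N - k))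
        ≤ ∑ j ∈ range (N + 1), t ^ j * (1 - t) ^ (N - j) * N.choose j := by
          rw [mul_comm]
          exact single_le_sum (f := fun j => t ^ j * (1 - t) ^ (N - j) * N.choose j)
            (fun j _ => mul_nonneg (mul_nonneg (by positivity) (pow_nonneg (by linarith) _))
              (Nat.cast_nonneg _)) (mem_range.2 (Nat.lt_succ_of_le hk))
      _ = 1 := by rw [← add_pow, add_sub_cancel, one_pow]
  · simp [Nat.choose_eq_zero_of_lt hk]

theorem choose_mul_cNk_le {lam : Measure ℝ} [IsProbabilityMeasure lam]
    (hlam : lam (Set.Icc (0 : ℝ) 1)ᶜ = 0) {N k : ℕ} {B : ℝ}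
    (hB : ∀ t ∈ Set.Icc (0 : ℝ) 1, (N.choose k : ℝ) * (t ^ k * (1 - t) ^ (N - k)) ≤ B) :
    (N.choose k : ℝ) * cNk lam N k ≤ B := by
  have hIcc : ∀ᵐ t ∂lam, t ∈ Set.Icc (0 : ℝ) 1 :=
    (measure_eq_zero_iff_ae_notMem.mp hlam).mono fun _ h => not_not.mp h
  calc (N.choose k : ℝ) * cNk lam N k
      = ∫ t, (N.choose k : ℝ) * (t ^ k * (1 - t) ^ (N - k)) ∂lam := (integral_const_mul _ _).symm
    _ ≤ ∫ _, B ∂lam := by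
      refine integral_mono_of_nonneg ?_ (integrable_const B) (hIcc.mono hB)
      filter_upwards [hIcc] with t ⟨ht0, ht1⟩
      have : 0 ≤ 1 - t := by linarith
      positivity
    _ = B := by simp

theorem hasSum_pow_natAbs {r : ℝ} (h0 : 0 ≤ r) (h1 : r < 1) :
    HasSum (fun j : ℤ => r ^ j.natAbs) ((1 + r) / (1 - r)) := by
  have hpos := hasSum_geometric_of_lt_one h0 h1
  have hneg : HasSum (fun n : ℕ => r ^ (-((n : ℤ) + 1)).natAbs) (r * (1 - r)⁻¹) := by
    have hf : (fun n : ℕ => r ^ (-((n : ℤ) + 1)).natAbs) = fun n => r * r ^ n := by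
      funext n
      rw [Int.natAbs_neg, ← Nat.cast_succ, Int.natAbs_natCast, pow_succ']
    exact hf ▸ hpos.mul_left r
  convert HasSum.of_nat_of_neg_add_one (f := fun j : ℤ => r ^ j.natAbs) (by simpa using hpos)
    hneg using 1
  field_simp [(sub_pos.2 h1).ne']

theorem sum_rpow_neg_abs_sub_le {α : ℝ} (hα : 1 < α) (s : Finset ℕ) (M : ℕ) :
    ∑ k ∈ s, α ^ (-|(k : ℝ) - M|) ≤ (1 + α⁻¹) / (1 - α⁻¹) := by
  have hterm : ∀ k : ℕ, α ^ (-|(k : ℝ) - M|) = α⁻¹ ^ ((k : ℤ) - M).natAbs := by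
    intro k
    rw [rpow_neg (by linarith), inv_pow, ← rpow_natCast, Nat.cast_natAbs, Int.cast_abs, Int.cast_sub,
      Int.cast_natCast, Int.cast_natCast]
  simp_rw [hterm]
  rw [← sum_image (f := fun j : ℤ => α⁻¹ ^ j.natAbs) (g := fun k : ℕ => (k : ℤ) - M)
    (by intro a _ b _ h; simpa using h)]
  exact sum_le_hasSum _ (fun _ _ => by positivity)
    (hasSum_pow_natAbs (inv_nonneg.2 (by linarith)) (inv_lt_one_of_one_lt₀ hα))

theorem rpow_neg_abs_sub_floor_le {α y z ε : ℝ} (hα : 1 ≤ α) (hy : 0 ≤ y) (N : ℕ)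
    (hz : ε * N < |z - y|) : α ^ (-|z - ⌊y⌋₊|) ≤ α * (α ^ (-ε)) ^ N := by
  have hfloor : |(⌊y⌋₊ : ℝ) - y| < 1 := by
    rw [abs_sub_comm, abs_of_nonneg (sub_nonneg.2 (Nat.floor_le hy))]
    linarith [Nat.lt_floor_add_one y]
  have hdist : |z - y| ≤ |z - ⌊y⌋₊| + |(⌊y⌋₊ : ℝ) - y| := abs_sub_le _ _ _
  calc α ^ (-|z - ⌊y⌋₊|) ≤ α ^ (1 + -ε * N) := rpow_le_rpow_of_exponent_le hα (by linarith)
    _ = α * (α ^ (-ε)) ^ N := by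
      rw [rpow_add (by linarith), rpow_one, ← rpow_natCast, ← rpow_mul (by linarith)]

theorem exists_add_one_mul_pow_le_div_sqrt {ρ : ℝ} (h0 : 0 ≤ ρ) (h1 : ρ < 1) :
    ∃ B, 0 ≤ B ∧ ∀ n : ℕ, 0 < n → (n + 1) * ρ ^ n ≤ B / √n := by
  obtain ⟨B, hB⟩ := (tendsto_pow_const_mul_const_pow_of_abs_lt_one 2
    (by rwa [abs_of_nonneg h0])).bddAbove_range
  have hB' : ∀ n : ℕ, (n : ℝ) ^ 2 * ρ ^ n ≤ B := fun n => hB (Set.mem_range_self n)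
  refine ⟨2 * B, by simpa using hB' 0, fun n hn => ?_⟩
  have hn1 : (1 : ℝ) ≤ n := by exact_mod_cast hn
  have hsqrt : √(n : ℝ) ≤ n :=
    (sqrt_le_sqrt (by nlinarith : (n : ℝ) ≤ n ^ 2)).trans_eq (sqrt_sq (by positivity))
  have hpoly : (n + 1) * √n ≤ 2 * (n : ℝ) ^ 2 := by nlinarith [sqrt_nonneg (n : ℝ)]
  rw [le_div_iff₀ (by positivity)]
  calc (n + 1) * ρ ^ n * √n = ((n + 1) * √n) * ρ ^ n := by ring
    _ ≤ 2 * (n : ℝ) ^ 2 * ρ ^ n := mul_le_mul_of_nonneg_right hpoly (pow_nonneg h0 n)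
    _ ≤ 2 * B := by linarith [hB' n]

theorem choose_mul_cNk_mul_rpow_le {lam : Measure ℝ} [IsProbabilityMeasure lam]
    (hlam : lam (Set.Icc (0 : ℝ) 1)ᶜ = 0) {α x ε : ℝ} (hα : 1 ≤ α) (hε : 0 < ε)
    (hεx : 2 * ε ≤ x) (hεx' : 2 * ε ≤ 1 - x) {N : ℕ} (hN : 0 < N) (k : ℕ) :
    (N.choose k : ℝ) * cNk lam N k * α ^ (-|(k : ℝ) - ⌊x * N⌋₊|) ≤
      exp 1 / (2 * π * ε) / √N * α ^ (-|(k : ℝ) - ⌊x * N⌋₊|) + α * (α ^ (-ε)) ^ N := by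
  have hw : 0 ≤ α ^ (-|(k : ℝ) - ⌊x * N⌋₊|) := rpow_nonneg (by linarith) _
  have htail : 0 ≤ α * (α ^ (-ε)) ^ N :=
    mul_nonneg (by linarith) (pow_nonneg (rpow_nonneg (by linarith) _) _)
  by_cases hnear : |(k : ℝ) - x * N| ≤ ε * N
  · obtain ⟨hlo, hhi⟩ := abs_le.mp hnear
    have hcoef := choose_mul_cNk_le hlam fun _ ht =>
      choose_mul_pow_mul_one_sub_pow_le_div_sqrt hε hN (by nlinarith) (by nlinarith) ht
    linarith [mul_le_mul_of_nonneg_right hcoef hw]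
  · have hcoef := choose_mul_cNk_le hlam (N := N) (k := k) fun _ ht =>
      choose_mul_pow_mul_one_sub_pow_le_one ht
    have hfar := rpow_neg_abs_sub_floor_le hα (mul_nonneg (by linarith) N.cast_nonneg) N
      (not_le.mp hnear)
    have hK : 0 ≤ exp 1 / (2 * π * ε) / √N := by positivity
    linarith [mul_le_mul_of_nonneg_right hcoef hw, mul_nonneg hK hw]

theorem stmt16_general (d : ℕ) (hd : 2 ≤ d) (lam : Measure ℝ)
    (h1 : IsProbabilityMeasure lam) (h2 : lam (Set.Icc (0:ℝ) 1)ᶜ = 0)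
    (x : ℝ) (hx : x ∈ Set.Ioo (0:ℝ) 1) :
    ∃ C : ℝ, 0 < C ∧ ∀ N : ℕ, 1 ≤ N →
      ∑ k ∈ Finset.range (N + 1),
          (N.choose k : ℝ) * cNk lam N k *
            Real.sqrt d ^ (-|(k : ℝ) - (⌊x * N⌋₊ : ℝ)|) ≤
        C / Real.sqrt N := by
  obtain ⟨hx0, hx1⟩ := hx
  set α := √(d : ℝ)
  have hα : 1 < α := by
    rw [lt_sqrt zero_le_one, one_pow]
    exact_mod_cast hd
  obtain ⟨ε, hε, hεx, hεx'⟩ : ∃ ε : ℝ, 0 < ε ∧ 2 * ε ≤ x ∧ 2 * ε ≤ 1 - x :=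
    ⟨min x (1 - x) / 2, half_pos (lt_min hx0 (sub_pos.2 hx1)),
      by linarith [min_le_left x (1 - x)], by linarith [min_le_right x (1 - x)]⟩
  obtain ⟨B, hB0, hB⟩ := exists_add_one_mul_pow_le_div_sqrt (rpow_nonneg (by linarith) (-ε))
    (rpow_lt_one_of_one_lt_of_neg hα (neg_neg_of_pos hε))
  set K := exp 1 / (2 * π * ε)
  set G := (1 + α⁻¹) / (1 - α⁻¹)
  have hG : 0 < G := div_pos (by positivity) (sub_pos.2 (inv_lt_one_of_one_lt₀ hα))
  refine ⟨K * G + α * B, by positivity, fun N hN => ?_⟩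
  calc ∑ k ∈ range (N + 1), (N.choose k : ℝ) * cNk lam N k * α ^ (-|(k : ℝ) - ⌊x * N⌋₊|)
      ≤ ∑ k ∈ range (N + 1), (K / √N * α ^ (-|(k : ℝ) - ⌊x * N⌋₊|) + α * (α ^ (-ε)) ^ N) :=
        sum_le_sum fun k _ => choose_mul_cNk_mul_rpow_le h2 hα.le hε hεx hεx' hN k
    _ = K / √N * ∑ k ∈ range (N + 1), α ^ (-|(k : ℝ) - ⌊x * N⌋₊|) +
          α * ((N + 1) * (α ^ (-ε)) ^ N) := by
        rw [sum_add_distrib, ← mul_sum, sum_const, card_range, nsmul_eq_mul]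
        push_cast
        ring
    _ ≤ K / √N * G + α * (B / √N) := by
        gcongr
        · exact sum_rpow_neg_abs_sub_le hα _ _
        · exact hB N hN
    _ = (K * G + α * B) / √N := by ring

/-- for `d ≥ 2`, a probability measure `λ` on `[0,1]` invariant under
`t ↦ 1−t`, `x ∈ (0,1)`, `α = √d` and `M = ⌊xN⌋`, there is `C > 0` with
`∑_{k=0}^N C(N,k) c^N_k α^{−|k−M|} ≤ C/√N` for all `N ≥ 1`. -/
theorem stmt16 (d : ℕ) (hd : 2 ≤ d) (lam : Measure ℝ)
    (h1 : IsProbabilityMeasure lam) (h2 : lam (Set.Icc (0:ℝ) 1)ᶜ = 0)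
    (h3 : Measure.map (fun t : ℝ => 1 - t) lam = lam)
    (x : ℝ) (hx : x ∈ Set.Ioo (0:ℝ) 1) :
    ∃ C : ℝ, 0 < C ∧ ∀ N : ℕ, 1 ≤ N →
      ∑ k ∈ Finset.range (N + 1),
          (N.choose k : ℝ) * cNk lam N k *
            Real.sqrt d ^ (-|(k : ℝ) - (⌊x * N⌋₊ : ℝ)|) ≤
        C / Real.sqrt N :=
  stmt16_general d hd lam h1 h2 x hx
end
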